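/- arXiv:2503.20671 — 2 statements merged into one kernel-verified Lean document; each statement's English description precedes it below -/
import Mathlib

section
/- In a category with finite limits and parametrized list objects, the forgetful-composed-with-pullback functor Σ_A ∘ Δ_f having a right adjoint is equivalent to f : A → B being exponentiable, and also equivalent to the pullback functor Δ_f : C/B → C/A having a right adjoint Π_f. -/
/-!
On `C/B`, `Σ_f ∘ Δ_f` is `f × −`, hence `Σ_A ∘ Δ_f ≅ Σ_B ∘ (f × −)`. So a right adjoint of `f × −`
gives one of `Σ_A ∘ Δ_f`, and a right adjoint `Π_f` of `Δ_f` gives `f × − = Σ_f ∘ Δ_f ⊣ Δ_f ∘ Π_f`.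
Conversely, `Σ_A` is comonadic (its comonad is `A × −`), so by the adjoint triangle theorem a right
adjoint of `Σ_A ∘ Δ_f` lifts to a right adjoint of `Δ_f`.
-/

open CategoryTheory Limits

/-- A parametrized list object on `X`: an object `L` with "nil" and "cons" maps
satisfying the (parametrized) recursion universal property. -/
structure ParamListObject {C : Type*} [Category C] [HasFiniteLimits C] (X : C) where
  L : C
  nil : ⊤_ C ⟶ L
  cons : X ⨯ L ⟶ L
  fold : ∀ {A B : C}, (A ⟶ B) → (X ⨯ B ⟶ B) → (A ⨯ L ⟶ B)
  fold_nil : ∀ {A B : C} (g : A ⟶ B) (h : X ⨯ B ⟶ B),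
    prod.lift (𝟙 A) (terminal.from A ≫ nil) ≫ fold g h = g
  fold_cons : ∀ {A B : C} (g : A ⟶ B) (h : X ⨯ B ⟶ B),
    prod.map (𝟙 A) cons ≫ fold g h =
      prod.lift (prod.snd ≫ prod.fst) (prod.map (𝟙 A) prod.snd ≫ fold g h) ≫ h
  fold_unique : ∀ {A B : C} (g : A ⟶ B) (h : X ⨯ B ⟶ B) (f : A ⨯ L ⟶ B),
    prod.lift (𝟙 A) (terminal.from A ≫ nil) ≫ f = g →
    prod.map (𝟙 A) cons ≫ f =
      prod.lift (prod.snd ≫ prod.fst) (prod.map (𝟙 A) prod.snd ≫ f) ≫ h →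
    f = fold g h

namespace CategoryTheory.Over

variable {C : Type*} [Category C]

noncomputable def iteratedSliceForwardMapIsoForget {B : C} (F : Over B) :
    F.iteratedSliceForward ⋙ map F.hom ≅ forget F :=
  NatIso.ofComponents
    (fun g => isoMk (Iso.refl _) ((Category.id_comp _).trans (w g.hom).symm))
    (fun _ => by ext; exact (Category.comp_id _).trans (Category.id_comp _).symm)

section BinaryProducts

variable [HasBinaryProducts C]

noncomputable def starForgetIsoProdFunctor (X : C) : star X ⋙ forget X ≅ prod.functor.obj X :=
  NatIso.ofComponents (fun _ => Iso.refl _)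
    (fun _ => (Category.comp_id _).trans (Category.id_comp _).symm)

noncomputable instance comonadicLeftAdjointForget [HasEqualizers C] (A : C) :
    ComonadicLeftAdjoint (forget A) :=
  have : Comonad.PreservesLimitOfIsCoreflexivePair (forget A) := ⟨fun _ _ _ _ _ => inferInstance⟩
  Comonad.comonadicOfHasPreservesCoreflexiveEqualizersOfReflectsIsomorphisms (forgetAdjStar A)

end BinaryProducts

variable [HasFiniteLimits C] {A B : C} (f : A ⟶ B)

/-- Both functors are right adjoint to `Σ_f`, the former through `(C/B)/f ≌ C/A`. -/
noncomputable def starIteratedSliceForwardIsoPullback :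
    star (Over.mk f) ⋙ (Over.mk f).iteratedSliceForward ≅ pullback f :=
  conjugateIsoEquiv ((Over.mk f).iteratedSliceEquiv.symm.toAdjunction.comp (forgetAdjStar _))
    (mapPullbackAdj f) (eqToIso (iteratedSliceBackward_forget (Over.mk f)))

noncomputable def pullbackMapIsoProdFunctor :
    pullback f ⋙ map f ≅ prod.functor.obj (Over.mk f) :=
  Functor.isoWhiskerRight (starIteratedSliceForwardIsoPullback f).symm _ ≪≫
    Functor.associator _ _ _ ≪≫
    Functor.isoWhiskerLeft _ (iteratedSliceForwardMapIsoForget (Over.mk f)) ≪≫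
    starForgetIsoProdFunctor _

noncomputable def pullbackForgetIsoProdFunctorForget :
    pullback f ⋙ forget A ≅ prod.functor.obj (Over.mk f) ⋙ forget B :=
  Functor.isoWhiskerLeft (pullback f) (mapForget f).symm ≪≫ (Functor.associator _ _ _).symm ≪≫
    Functor.isoWhiskerRight (pullbackMapIsoProdFunctor f) (forget B)

theorem isLeftAdjoint_pullback_comp_forget_iff :
    (pullback f ⋙ forget A).IsLeftAdjoint ↔ (pullback f).IsLeftAdjoint :=
  ⟨fun _ => isLeftAdjoint_triangle_lift_comonadic (forget A), fun _ => inferInstance⟩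

theorem isLeftAdjoint_prodFunctor_of_isLeftAdjoint_pullback [(pullback f).IsLeftAdjoint] :
    (prod.functor.obj (Over.mk f)).IsLeftAdjoint :=
  Functor.isLeftAdjoint_of_iso (pullbackMapIsoProdFunctor f)

theorem isLeftAdjoint_pullback_comp_forget_of_isLeftAdjoint_prodFunctor
    [(prod.functor.obj (Over.mk f)).IsLeftAdjoint] : (pullback f ⋙ forget A).IsLeftAdjoint :=
  Functor.isLeftAdjoint_of_iso (pullbackForgetIsoProdFunctorForget f).symm

end CategoryTheory.Over

theorem niefield_fact_general {C : Type*} [Category C] [HasFiniteLimits C]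
    {A B : C} (f : A ⟶ B) :
    ((Over.pullback f ⋙ Over.forget A).IsLeftAdjoint ↔
      ((prod.functor.obj (Over.mk f) : Over B ⥤ Over B).IsLeftAdjoint)) ∧
    ((Over.pullback f ⋙ Over.forget A).IsLeftAdjoint ↔
      (Over.pullback f : Over B ⥤ Over A).IsLeftAdjoint) := by
  have pullback_iff := Over.isLeftAdjoint_pullback_comp_forget_iff f
  refine ⟨⟨fun h => ?_, fun _ => ?_⟩, pullback_iff⟩
  · have := pullback_iff.mp h
    exact Over.isLeftAdjoint_prodFunctor_of_isLeftAdjoint_pullback f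
  · exact Over.isLeftAdjoint_pullback_comp_forget_of_isLeftAdjoint_prodFunctor f

/-- Niefield's fact: in a category with finite limits (and parametrized list objects),
for `f : A ⟶ B`, the functor `Σ_A ∘ Δ_f` has a right adjoint iff `f` is exponentiable
(i.e. `− × f` on `C/B` has a right adjoint) iff `Δ_f` has a right adjoint `Π_f`. -/
theorem niefield_fact {C : Type*} [Category C] [HasFiniteLimits C]
    (listObj : ∀ X : C, ParamListObject X) {A B : C} (f : A ⟶ B) :
    ((Over.pullback f ⋙ Over.forget A).IsLeftAdjoint ↔
      ((prod.functor.obj (Over.mk f) : Over B ⥤ Over B).IsLeftAdjoint)) ∧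
    ((Over.pullback f ⋙ Over.forget A).IsLeftAdjoint ↔
      (Over.pullback f : Over B ⥤ Over A).IsLeftAdjoint) :=
  niefield_fact_general f
end

section
/- In an extensive category with finite limits and parametrized list objects, for every object X the square with top row r₁ˣ : X × L(X) → L(X), left map len ∘ π₂ : X × L(X) → N, right map len : L(X) → N, and bottom map s : N → N is a pullback; moreover the coproduct 1 → N ← N given by (0, s) is universal (stable under pullback). -/
/-!
Recursion on a parametrized list object forces `[nil, cons] : 1 ⨿ X × L(X) ⟶ L(X)` to be an
isomorphism (Lambek's lemma), whose inverse is defined by recursion into `1 ⨿ X × L(X)`. For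
`X = 1` this says that `(0, s)` is a coproduct cofan on `N`, which is van Kampen because `C` is
extensive. Hence it is universal, and since `len` maps the coproduct `(nil, cons)` onto it along
`𝟙 : 1 ⟶ 1` and `len ∘ π₂ : X × L(X) ⟶ N`, the squares of that map of coproducts are pullbacks.
-/

open CategoryTheory Limits

variable {C : Type*} [Category C] [HasFiniteLimits C]

/-- The natural numbers object `N = L(1)`. -/
noncomputable def NObj (listObj : ∀ X : C, ParamListObject X) : C :=
  (listObj (⊤_ C)).L

/-- Zero `0 : 1 ⟶ N` is the empty list. -/
noncomputable def NZero (listObj : ∀ X : C, ParamListObject X) : ⊤_ C ⟶ NObj listObj :=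
  (listObj (⊤_ C)).nil

/-- Successor `s : N ⟶ N` is consing the unique element of `1`. -/
noncomputable def NSucc (listObj : ∀ X : C, ParamListObject X) :
    NObj listObj ⟶ NObj listObj :=
  prod.lift (terminal.from _) (𝟙 _) ≫ (listObj (⊤_ C)).cons

/-- The length map `len : L(X) ⟶ N`, defined inductively by
`len ∅ = 0` and `len (x :: ℓ) = s (len ℓ)`. -/
noncomputable def lenMap (listObj : ∀ X : C, ParamListObject X) (X : C) :
    (listObj X).L ⟶ NObj listObj :=
  prod.lift (terminal.from _) (𝟙 _) ≫
    (listObj X).fold (NZero listObj) (prod.snd ≫ NSucc listObj)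

namespace ParamListObject

variable {X : C} (P : ParamListObject X)

noncomputable def iter {B : C} (b : ⊤_ C ⟶ B) (h : X ⨯ B ⟶ B) : P.L ⟶ B :=
  prod.lift (terminal.from _) (𝟙 _) ≫ P.fold b h

variable {B : C} (b : ⊤_ C ⟶ B) (h : X ⨯ B ⟶ B)

lemma nil_iter : P.nil ≫ P.iter b h = b := by
  have : P.nil ≫ prod.lift (terminal.from P.L) (𝟙 P.L) =
      prod.lift (𝟙 _) (terminal.from _ ≫ P.nil) := by
    ext
    simp [prod.lift_snd, terminal.hom_ext (terminal.from (⊤_ C)) (𝟙 _)]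
  rw [iter, reassoc_of% this, P.fold_nil]

lemma cons_iter : P.cons ≫ P.iter b h = prod.map (𝟙 X) (P.iter b h) ≫ h := by
  have : P.cons ≫ prod.lift (terminal.from P.L) (𝟙 P.L) =
      prod.lift (terminal.from _) (𝟙 _) ≫ prod.map (𝟙 _) P.cons := by
    ext
    simp [prod.lift_snd]
  rw [iter, reassoc_of% this, P.fold_cons, ← Category.assoc]
  congr 1
  ext
  · simp [prod.lift_fst, prod.lift_snd_assoc]
  · simp only [prod.map_snd]
    rw [← Category.assoc, prod.comp_lift]
    simp [prod.lift_snd]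

lemma iter_unique (f : P.L ⟶ B) (hnil : P.nil ≫ f = b)
    (hcons : P.cons ≫ f = prod.map (𝟙 X) f ≫ h) : f = P.iter b h := by
  have : prod.snd ≫ f = P.fold b h := by
    apply P.fold_unique
    · simpa [prod.lift_snd_assoc, terminal.hom_ext (terminal.from (⊤_ C)) (𝟙 _)] using hnil
    · rw [prod.map_snd_assoc, hcons, ← Category.assoc]
      congr 1
      ext <;> simp [prod.lift_fst, prod.lift_snd]
  rw [iter, ← this, prod.lift_snd_assoc, Category.id_comp]

lemma iter_nil_cons : P.iter P.nil P.cons = 𝟙 P.L :=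
  (P.iter_unique _ _ _ (by simp) (by simp)).symm

variable [HasBinaryCoproducts C]

noncomputable def uncons : P.L ⟶ (⊤_ C) ⨿ (X ⨯ P.L) :=
  P.iter coprod.inl (prod.map (𝟙 X) (coprod.desc P.nil P.cons) ≫ coprod.inr)

lemma uncons_desc : P.uncons ≫ coprod.desc P.nil P.cons = 𝟙 P.L := by
  rw [← P.iter_nil_cons]
  apply P.iter_unique
  · rw [uncons, ← Category.assoc, nil_iter, coprod.inl_desc]
  · rw [uncons, ← Category.assoc, cons_iter, Category.assoc, Category.assoc, coprod.inr_desc,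
      ← Category.assoc, prod.map_map, Category.comp_id]

lemma desc_uncons : coprod.desc P.nil P.cons ≫ P.uncons = 𝟙 _ := by
  ext
  · rw [coprod.inl_desc_assoc, uncons, nil_iter, Category.comp_id]
  · rw [coprod.inr_desc_assoc, uncons, cons_iter, ← Category.assoc, prod.map_map, ← uncons,
      uncons_desc]
    simp only [Category.comp_id, prod.map_id_id, Category.id_comp]

noncomputable def nilConsIso : (⊤_ C) ⨿ (X ⨯ P.L) ≅ P.L :=
  ⟨coprod.desc P.nil P.cons, P.uncons, P.desc_uncons, P.uncons_desc⟩

noncomputable def isColimitNilCons : IsColimit (BinaryCofan.mk P.nil P.cons) :=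
  (coprodIsCoprod _ _).ofIsoColimit
    (BinaryCofan.ext P.nilConsIso (coprod.inl_desc _ _) (coprod.inr_desc _ _))

end ParamListObject

section Naturals

variable (listObj : ∀ X : C, ParamListObject X)

noncomputable def isColimitZeroSucc [HasBinaryCoproducts C] :
    IsColimit (BinaryCofan.mk (NZero listObj) (NSucc listObj)) :=
  (BinaryCofan.mk _ _).isColimitCompRightIso (Limits.prod.leftUnitor _).inv
    (listObj (⊤_ C)).isColimitNilCons

lemma nil_lenMap (X : C) : (listObj X).nil ≫ lenMap listObj X = NZero listObj :=
  (listObj X).nil_iter _ _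

lemma cons_lenMap (X : C) :
    (listObj X).cons ≫ lenMap listObj X = prod.snd ≫ lenMap listObj X ≫ NSucc listObj := by
  rw [lenMap, ← ParamListObject.iter, ParamListObject.cons_iter, prod.map_snd_assoc]

end Naturals

theorem extensive_hyps (listObj : ∀ X : C, ParamListObject X) [FinitaryExtensive C] :
    (∀ X : C,
      IsPullback (listObj X).cons (prod.snd ≫ lenMap listObj X) (lenMap listObj X)
        (NSucc listObj)) ∧
    (∀ (Z : C) (h : Z ⟶ NObj listObj),
      Nonempty (IsColimit (BinaryCofan.mk
        (pullback.snd (NZero listObj) h) (pullback.snd (NSucc listObj) h)))) := by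
  have hN := FinitaryExtensive.vanKampen _ (isColimitZeroSucc listObj)
  rw [BinaryCofan.isVanKampen_iff] at hN
  refine ⟨fun X => ?_, fun Z h => ?_⟩
  · refine ((hN (BinaryCofan.mk (listObj X).nil (listObj X).cons) (𝟙 _)
      (prod.snd ≫ lenMap listObj X) (lenMap listObj X) ?_ ?_).mp
      ⟨(listObj X).isColimitNilCons⟩).2
    · exact (Category.id_comp _).trans (nil_lenMap listObj X).symm
    · exact (Category.assoc _ _ _).trans (cons_lenMap listObj X).symm
  · have hpb {Y : C} (f : Y ⟶ NObj listObj) :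
        IsPullback (pullback.snd f h) (pullback.fst f h) h f :=
      (IsPullback.of_hasPullback f h).flip
    exact (hN (BinaryCofan.mk _ _) _ _ h pullback.condition pullback.condition).mpr
      ⟨hpb _, hpb _⟩
end
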